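/- arXiv:1703.04487 — 2 statements merged into one kernel-verified Lean document; each statement's English description precedes it below -/
import Mathlib

section
/- Let 𝔥 be a finite-dimensional complex vector space with symmetric bilinear form (·,·) and basis h_1, …, h_N. On the polynomial algebra ℂ[x_{i,k} : 1 ≤ i ≤ N, k ≥ 1] define, for each basis vector h_i: ρ(h_i(−k)) = multiplication by x_{i,k} for k ≥ 1; ρ(h_i(k)) = the ℂ-linear derivation determined by ρ(h_i(k))·x_{j,l} = δ_{k,l}·k·(h_i,h_j) for k ≥ 1; ρ(h_i(0)) = 0; and extend ℂ-linearly in the first argument to ρ(α(k)) for all α ∈ 𝔥. Then for all α, β ∈ 𝔥 and all k, l ∈ ℤ, the commutator satisfies ρ(α(k))ρ(β(l)) − ρ(β(l))ρ(α(k)) = k·(α,β)·δ_{k+l,0}·id. In other words, this prescription makes the symmetric algebra S(ĥ_−) into a module over the Heisenberg algebra ĥ = (𝔥 ⊗ ℂ[t,t^{-1}]) ⊕ ℂ𝔠 with 𝔠 acting as the identity. -/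
/-!
Negative modes act by multiplication and positive modes by derivations sending every generator
to a constant. Hence two multiplications commute, two such derivations commute (their
commutator is a derivation killing every generator), and the commutator of a derivation `D`
with multiplication by `f` is multiplication by `D f`; for `f = x_{β,n}` this is the constant
`k (α,β) δ_{k+l,0}`. Symmetry of the form handles the case of a negative mode on the left.
-/

noncomputable section

/-- The Fock-space action `ρ(α(k))` of the Heisenberg algebra
`ĥ = (𝔥 ⊗ ℂ[t,t⁻¹]) ⊕ ℂ𝔠` on `S(ĥ₋) = ℂ[x_{i,k} : 1 ≤ i ≤ N, k ≥ 1]`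
(the variable `(i,k)` stands for `x_{i,k+1}`):
`ρ(h_i(-k))` is multiplication by `x_{i,k}` for `k ≥ 1`; `ρ(h_i(k))` for `k ≥ 1` is the
derivation with `ρ(h_i(k))·x_{j,l} = δ_{k,l}·k·(h_i,h_j)`; `ρ(h_i(0)) = 0`; extended
ℂ-linearly in the first argument (via the coordinates `b.repr`). -/
def heisRho {H : Type*} [AddCommGroup H] [Module ℂ H] {N : ℕ}
    (b : Module.Basis (Fin N) ℂ H) (B : H →ₗ[ℂ] H →ₗ[ℂ] ℂ) (α : H) (k : ℤ) :
    Module.End ℂ (MvPolynomial (Fin N × ℕ) ℂ) :=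
  if k < 0 then
    LinearMap.mulLeft ℂ (∑ i, b.repr α i • MvPolynomial.X (i, (-k - 1).toNat))
  else if 0 < k then
    ∑ j, ((k : ℂ) * B α (b j)) • (MvPolynomial.pderiv (j, (k - 1).toNat)).toLinearMap
  else 0

open MvPolynomial

theorem Derivation.sum_apply {R A M ι : Type*} [CommSemiring R] [CommSemiring A]
    [AddCommMonoid M] [Algebra R A] [Module A M] [Module R M] (s : Finset ι)
    (D : ι → Derivation R A M) (a : A) : (∑ i ∈ s, D i) a = ∑ i ∈ s, D i a := by
  rw [← Derivation.coeFnAddMonoidHom_apply, map_sum, Finset.sum_apply]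
  rfl

theorem Derivation.toLinearMap_mul_mulLeft_sub {R A : Type*} [CommSemiring R] [CommRing A]
    [Algebra R A] (D : Derivation R A A) (a : A) :
    D.toLinearMap * LinearMap.mulLeft R a - LinearMap.mulLeft R a * D.toLinearMap =
      LinearMap.mulLeft R (D a) := by
  ext q
  simp only [LinearMap.sub_apply, Module.End.mul_apply, LinearMap.mulLeft_apply,
    Derivation.coeFn_coe, Derivation.leibniz, smul_eq_mul]
  ring

theorem LinearMap.mulLeft_algebraMap {R A : Type*} [CommSemiring R] [Semiring A]
    [Algebra R A] (c : R) : LinearMap.mulLeft R (algebraMap R A c) = c • 1 := by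
  ext q
  simp [Algebra.smul_def]

theorem MvPolynomial.derivation_commute_of_map_X_mem_range_C {R σ : Type*} [CommRing R]
    {D₁ D₂ : Derivation R (MvPolynomial σ R) (MvPolynomial σ R)}
    (h₁ : ∀ i, D₁ (X i) ∈ Set.range C) (h₂ : ∀ i, D₂ (X i) ∈ Set.range C) :
    Commute D₁.toLinearMap D₂.toLinearMap := by
  have : ⁅D₁, D₂⁆ = 0 := derivation_ext fun i => by
    obtain ⟨c₁, hc₁⟩ := h₁ i
    obtain ⟨c₂, hc₂⟩ := h₂ i
    rw [Derivation.commutator_apply, ← hc₁, ← hc₂, derivation_C, derivation_C, sub_zero,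
      Derivation.zero_apply]
  rw [commute_iff_lie_eq, ← Derivation.commutator_coe_linear_map, this]
  rfl

section Heisenberg

variable {H : Type*} [AddCommGroup H] [Module ℂ H] {N : ℕ}
  (b : Module.Basis (Fin N) ℂ H) (B : H →ₗ[ℂ] H →ₗ[ℂ] ℂ)

-- `ρ(α(-n-1))` is multiplication by `heisGen b α n = x_{α,n+1}`, and
-- `ρ(α(n+1)) = (n+1) • heisDeriv b B α n`.
def heisGen (α : H) (n : ℕ) : MvPolynomial (Fin N × ℕ) ℂ := ∑ i, b.repr α i • X (i, n)

def heisDeriv (α : H) (n : ℕ) :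
    Derivation ℂ (MvPolynomial (Fin N × ℕ) ℂ) (MvPolynomial (Fin N × ℕ) ℂ) :=
  ∑ j, B α (b j) • pderiv (j, n)

theorem heisDeriv_X (α : H) (m : ℕ) (i : Fin N) (n : ℕ) :
    heisDeriv b B α m (X (i, n)) = C (if n = m then B α (b i) else 0) := by
  by_cases h : n = m <;>
    simp [heisDeriv, Derivation.sum_apply, pderiv_X, Pi.single_apply, h, smul_eq_C_mul]

theorem heisDeriv_heisGen (α β : H) (m n : ℕ) :
    heisDeriv b B α m (heisGen b β n) = C (if n = m then B α β else 0) := by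
  have hB : B α β = ∑ i, b.repr β i * B α (b i) := by
    conv_lhs => rw [← b.sum_repr β]
    simp only [map_sum, map_smul, smul_eq_mul]
  simp only [heisGen, map_sum, Derivation.map_smul, heisDeriv_X]
  simp only [smul_eq_C_mul, ← C_mul, ← map_sum]
  split_ifs <;> simp [hB]

theorem heisDeriv_commute (α β : H) (m n : ℕ) :
    Commute (heisDeriv b B α m).toLinearMap (heisDeriv b B β n).toLinearMap :=
  derivation_commute_of_map_X_mem_range_C (fun _ => ⟨_, (heisDeriv_X ..).symm⟩)
    (fun _ => ⟨_, (heisDeriv_X ..).symm⟩)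

theorem heisRho_of_neg (α : H) {k : ℤ} (hk : k < 0) :
    heisRho b B α k = LinearMap.mulLeft ℂ (heisGen b α (-k - 1).toNat) :=
  if_pos hk

theorem heisRho_of_pos (α : H) {k : ℤ} (hk : 0 < k) :
    heisRho b B α k = ((k : ℂ) • heisDeriv b B α (k - 1).toNat).toLinearMap := by
  rw [heisRho, if_neg hk.not_gt, if_pos hk]
  ext p
  simp [heisDeriv, Derivation.sum_apply, Finset.smul_sum, mul_smul]

@[simp]
theorem heisRho_zero (α : H) : heisRho b B α 0 = 0 := by
  simp [heisRho]

theorem heisRho_commute_of_neg (α β : H) {k l : ℤ} (hk : k < 0) (hl : l < 0) :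
    Commute (heisRho b B α k) (heisRho b B β l) := by
  rw [heisRho_of_neg b B α hk, heisRho_of_neg b B β hl]
  exact (Commute.all _ _).map (Algebra.lmul ℂ _)

theorem heisRho_commute_of_pos (α β : H) {k l : ℤ} (hk : 0 < k) (hl : 0 < l) :
    Commute (heisRho b B α k) (heisRho b B β l) := by
  rw [heisRho_of_pos b B α hk, heisRho_of_pos b B β hl, Derivation.coe_smul_linearMap,
    Derivation.coe_smul_linearMap]
  exact ((heisDeriv_commute b B α β _ _).smul_left _).smul_right _

theorem heisRho_commutator_of_pos_of_neg (α β : H) {k l : ℤ} (hk : 0 < k) (hl : l < 0) :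
    heisRho b B α k * heisRho b B β l - heisRho b B β l * heisRho b B α k =
      if k + l = 0 then ((k : ℂ) * B α β) • (1 : Module.End ℂ (MvPolynomial (Fin N × ℕ) ℂ))
      else 0 := by
  have hindex : (-l - 1).toNat = (k - 1).toNat ↔ k + l = 0 := by omega
  rw [heisRho_of_pos b B α hk, heisRho_of_neg b B β hl, Derivation.toLinearMap_mul_mulLeft_sub,
    Derivation.smul_apply, heisDeriv_heisGen, smul_eq_C_mul, ← C_mul, ← algebraMap_eq,
    LinearMap.mulLeft_algebraMap]
  simp only [hindex]
  split_ifs <;> simp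

end Heisenberg

/-- for a finite-dimensional complex vector space `𝔥` with symmetric
bilinear form `B` and basis `h_1, …, h_N`, the operators `ρ(α(k))` above satisfy
`[ρ(α(k)), ρ(β(l))] = k (α,β) δ_{k+l,0} id`; i.e. `S(ĥ₋)` is a module over the
Heisenberg algebra `ĥ` with `𝔠` acting as the identity. -/
theorem heisRho_commutator {H : Type*} [AddCommGroup H] [Module ℂ H] {N : ℕ}
    (b : Module.Basis (Fin N) ℂ H) (B : H →ₗ[ℂ] H →ₗ[ℂ] ℂ)
    (hB : ∀ x y : H, B x y = B y x)
    (α β : H) (k l : ℤ) :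
    heisRho b B α k * heisRho b B β l - heisRho b B β l * heisRho b B α k =
      if k + l = 0 then ((k : ℂ) * B α β) • (1 : Module.End ℂ (MvPolynomial (Fin N × ℕ) ℂ))
      else 0 := by
  rcases eq_or_ne k 0 with rfl | hk0
  · simp
  rcases eq_or_ne l 0 with rfl | hl0
  · simp [hk0]
  rcases hk0.lt_or_gt with hk | hk <;> rcases hl0.lt_or_gt with hl | hl
  · rw [if_neg (by omega), sub_eq_zero]
    exact (heisRho_commute_of_neg b B α β hk hl).eq
  · rw [← neg_sub, heisRho_commutator_of_pos_of_neg b B β α hl hk, add_comm l, hB β α]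
    split_ifs with hkl
    · rw [show (k : ℂ) = -l by exact_mod_cast (by omega : k = -l), neg_mul]
      exact (neg_smul _ _).symm
    · exact neg_zero
  · exact heisRho_commutator_of_pos_of_neg b B α β hk hl
  · rw [if_neg (by omega), sub_eq_zero]
    exact (heisRho_commute_of_pos b B α β hk hl).eq

end
end

section
/- Let {a(k), a*(k) : k ∈ ℤ} be a locally annihilating bosonic Weyl system on a complex vector space W over S = {a, a*} with pairing ⟨a, a*⟩ = −1, ⟨a*, a⟩ = 1, ⟨a,a⟩ = ⟨a*,a*⟩ = 0. Define H(m) := (:aa*:)(m) = Σ_{j<0} a(j)a*(m−j) + Σ_{j≥0} a*(m−j)a(j). Then for all m, n ∈ ℤ: H(m)H(n) − H(n)H(m) = −m·δ_{m+n,0}·id. That is, the normally ordered bilinear current of a single Weyl (βγ-)pair realizes a Heisenberg algebra at level −1. -/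
/-!
`H(m)` acts on the modes as a derivation: `[H(m), a(k)] = a(m+k)` and `[H(m), a*(k)] = -a*(m+k)`.
Applied termwise to `H(n)`, this turns `[H(m), H(n)] w` into the telescoping sum
`Σ_j (P(m+j) - P(j))` of the products `P(i) = a(i) a*(m+n-i) w` taken without normal ordering.
`P(i)` vanishes for `i ≪ 0`, while for `i ≫ 0` normal ordering shows `P(i) = -δ_{m+n,0} w`;
shifting such a sequence by `m` changes its total by `m` times its value at `+∞`.
-/

noncomputable section

/-- A *bosonic Weyl system* over a set `S` of symbols with pairing `pair : S → S → ℂ`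
on a complex vector space `W`: a family of operators `op u k` (`u ∈ S`, `k ∈ ℤ`)
such that `[op u k, op v l] = ⟨u,v⟩ δ_{k+l,0} id`. -/
def IsBosonicWeylSystem {S W : Type*} [AddCommGroup W] [Module ℂ W]
    (pair : S → S → ℂ) (op : S → ℤ → Module.End ℂ W) : Prop :=
  ∀ u v : S, ∀ k l : ℤ,
    op u k * op v l - op v l * op u k =
      if k + l = 0 then pair u v • (1 : Module.End ℂ W) else 0

/-- A family of operators is *locally annihilating* if for every vector `w` and
every symbol `u`, `op u k w = 0` for all sufficiently large `k`. -/
def LocallyAnnihilating {S W : Type*} [AddCommGroup W] [Module ℂ W]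
    (op : S → ℤ → Module.End ℂ W) : Prop :=
  ∀ (w : W) (u : S), ∃ K : ℤ, ∀ k : ℤ, K ≤ k → op u k w = 0

/-- The normally ordered quadratic mode
`(:uv:)(m) = Σ_{j<0} u(j)v(m-j) + Σ_{j≥0} v(m-j)u(j)` applied to a vector `w`;
on a locally annihilating system all but finitely many summands vanish, so the
`finsum` computes the intended (finite) sum. -/
def noMode {S W : Type*} [AddCommGroup W] [Module ℂ W]
    (op : S → ℤ → Module.End ℂ W) (u v : S) (m : ℤ) (w : W) : W :=
  ∑ᶠ j : ℤ, if j < 0 then op u j (op v (m - j) w) else op v (m - j) (op u j w)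

end

/-- The pairing on `S = {a, a*}` (with `false = a`, `true = a*`):
`⟨a,a*⟩ = -1`, `⟨a*,a⟩ = 1`, `⟨a,a⟩ = ⟨a*,a*⟩ = 0`. -/
def pairAAstar : Bool → Bool → ℂ
  | false, true => -1
  | true, false => 1
  | _, _ => 0

open Filter Function

section Telescoping

variable {M : Type*}

theorem hasFiniteSupport_of_eventually_atBot_atTop [Zero M] {f : ℤ → M}
    (hbot : ∀ᶠ j in atBot, f j = 0) (htop : ∀ᶠ j in atTop, f j = 0) :
    f.HasFiniteSupport := by
  have hcof : ∀ᶠ j in cofinite, f j = 0 := by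
    rw [Int.cofinite_eq]
    exact eventually_sup.2 ⟨hbot, htop⟩
  exact eventually_cofinite.1 hcof

theorem hasFiniteSupport_ite_eq {α : Type*} [DecidableEq α] [Zero M] (a : α) (g : α → M) :
    (fun j => if j = a then g j else 0).HasFiniteSupport :=
  (Set.finite_singleton a).subset fun _ hj => by_contra fun h => hj (if_neg h)

theorem finsum_ite_eq {α : Type*} [DecidableEq α] [AddCommMonoid M] (a : α) (g : α → M) :
    ∑ᶠ j, (if j = a then g j else 0) = g a := by
  rw [finsum_eq_single _ a fun j hj => if_neg hj, if_pos rfl]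

variable [AddCommGroup M]

theorem hasFiniteSupport_comp_add_sub_of_eventually {f : ℤ → M} {a b : M}
    (hbot : ∀ᶠ j in atBot, f j = a) (htop : ∀ᶠ j in atTop, f j = b) (m : ℤ) :
    (fun j => f (m + j) - f j).HasFiniteSupport := by
  refine hasFiniteSupport_of_eventually_atBot_atTop ?_ ?_
  · have hshift : Tendsto (fun j => m + j) atBot atBot :=
      tendsto_atBot_add_const_left atBot m tendsto_id
    filter_upwards [hshift.eventually hbot, hbot] with j h₁ h₂
    rw [h₁, h₂, sub_self]
  · have hshift : Tendsto (fun j => m + j) atTop atTop :=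
      tendsto_atTop_add_const_left atTop m tendsto_id
    filter_upwards [hshift.eventually htop, htop] with j h₁ h₂
    rw [h₁, h₂, sub_self]

theorem finsum_comp_add_sub_eq_zero {f : ℤ → M} (hf : f.HasFiniteSupport) (m : ℤ) :
    ∑ᶠ j, (f (m + j) - f j) = 0 := by
  have hshift : (fun j => f (m + j)).HasFiniteSupport :=
    hf.comp_of_injective (add_right_injective m)
  rw [finsum_sub_distrib hshift hf, sub_eq_zero]
  exact finsum_comp_equiv (Equiv.addLeft m)

theorem finsum_step_comp_add_sub (x : M) (m : ℤ) :
    ∑ᶠ j : ℤ, ((if 0 ≤ m + j then x else 0) - if 0 ≤ j then x else 0) = m • x := by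
  have hnat : ∀ k : ℕ,
      ∑ᶠ j : ℤ, ((if 0 ≤ (k : ℤ) + j then x else 0) - if 0 ≤ j then x else 0) =
        (k : ℤ) • x := by
    intro k
    have hind : ∀ j : ℤ, ((if 0 ≤ (k : ℤ) + j then x else 0) - if 0 ≤ j then x else 0) =
        (Finset.Ico (-(k : ℤ)) 0 : Set ℤ).indicator (fun _ => x) j := by
      intro j
      simp only [Finset.coe_Ico, Set.indicator_apply, Set.mem_Ico]
      split_ifs <;> first | (exfalso; omega) | simp
    rw [finsum_congr hind, ← finsum_mem_def, finsum_mem_coe_finset, Finset.sum_const,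
      Int.card_Ico]
    simp
  obtain ⟨k, rfl | rfl⟩ := Int.eq_nat_or_neg m
  · exact hnat k
  · rw [← finsum_comp_equiv (Equiv.addLeft (k : ℤ)), neg_smul, ← hnat k,
      ← finsum_neg_distrib]
    refine finsum_congr fun j => ?_
    rw [Equiv.coe_addLeft, neg_add_cancel_left, neg_sub]

theorem finsum_comp_add_sub_of_eventually {f : ℤ → M} {x : M}
    (hbot : ∀ᶠ j in atBot, f j = 0) (htop : ∀ᶠ j in atTop, f j = x) (m : ℤ) :
    ∑ᶠ j, (f (m + j) - f j) = m • x := by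
  -- `f - c` has finite support, so only the step function `c` contributes
  set c : ℤ → M := fun j => if 0 ≤ j then x else 0
  have hc_bot : ∀ᶠ j in atBot, c j = 0 :=
    (eventually_lt_atBot 0).mono fun j hj => if_neg hj.not_ge
  have hc_top : ∀ᶠ j in atTop, c j = x :=
    (eventually_ge_atTop 0).mono fun j hj => if_pos hj
  have hfc_bot : ∀ᶠ j in atBot, (f - c) j = 0 := by
    filter_upwards [hbot, hc_bot] with j h₁ h₂
    simp [h₁, h₂]
  have hfc_top : ∀ᶠ j in atTop, (f - c) j = 0 := by
    filter_upwards [htop, hc_top] with j h₁ h₂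
    simp [h₁, h₂]
  calc ∑ᶠ j, (f (m + j) - f j)
      = ∑ᶠ j, (((f - c) (m + j) - (f - c) j) + (c (m + j) - c j)) :=
        finsum_congr fun j => by simp only [Pi.sub_apply]; abel
    _ = m • x := by
      rw [finsum_add_distrib (hasFiniteSupport_comp_add_sub_of_eventually hfc_bot hfc_top m)
        (hasFiniteSupport_comp_add_sub_of_eventually hc_bot hc_top m),
        finsum_comp_add_sub_eq_zero (hasFiniteSupport_of_eventually_atBot_atTop hfc_bot hfc_top),
        zero_add, finsum_step_comp_add_sub]

end Telescoping

section WeylSystem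

variable {S W : Type*} [AddCommGroup W] [Module ℂ W] {pair : S → S → ℂ}
  {op : S → ℤ → Module.End ℂ W}

theorem IsBosonicWeylSystem.apply_comm (hW : IsBosonicWeylSystem pair op) (u v : S)
    (k l : ℤ) (w : W) :
    op u k (op v l w) = op v l (op u k w) + if k + l = 0 then pair u v • w else 0 := by
  rw [← sub_eq_iff_eq_add']
  have h := LinearMap.congr_fun (hW u v k l) w
  split_ifs at h ⊢ <;> simpa using h

theorem LocallyAnnihilating.eventually_apply_eq_zero_atTop (hA : LocallyAnnihilating op)
    (u : S) (w : W) :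
    ∀ᶠ k in atTop, op u k w = 0 :=
  eventually_atTop.2 (hA w u)

theorem LocallyAnnihilating.eventually_apply_apply_sub_atBot (hA : LocallyAnnihilating op)
    (u v : S) (N : ℤ) (w : W) : ∀ᶠ i in atBot, op u i (op v (N - i) w) = 0 := by
  obtain ⟨K, hK⟩ := hA w v
  exact eventually_atBot.2 ⟨N - K, fun i hi => by rw [hK (N - i) (by omega), map_zero]⟩

theorem IsBosonicWeylSystem.eventually_apply_apply_sub_atTop (hW : IsBosonicWeylSystem pair op)
    (hA : LocallyAnnihilating op) (u v : S) (N : ℤ) (w : W) :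
    ∀ᶠ i in atTop, op u i (op v (N - i) w) = -if N = 0 then pair v u • w else 0 := by
  filter_upwards [hA.eventually_apply_eq_zero_atTop u w] with i hi
  have hcomm := hW.apply_comm v u (N - i) i w
  rwa [hi, map_zero, sub_add_cancel, eq_comm, add_eq_zero_iff_eq_neg] at hcomm

variable (op) in
def noModeTerm (u v : S) (m : ℤ) (w : W) (j : ℤ) : W :=
  if j < 0 then op u j (op v (m - j) w) else op v (m - j) (op u j w)

theorem noMode_eq_finsum (u v : S) (m : ℤ) (w : W) :
    noMode op u v m w = ∑ᶠ j, noModeTerm op u v m w j := rfl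

theorem hasFiniteSupport_noModeTerm (hA : LocallyAnnihilating op) (u v : S) (m : ℤ) (w : W) :
    (noModeTerm op u v m w).HasFiniteSupport := by
  refine hasFiniteSupport_of_eventually_atBot_atTop ?_ ?_
  · filter_upwards [eventually_lt_atBot 0, hA.eventually_apply_apply_sub_atBot u v m w]
      with j hj h
    rw [noModeTerm, if_pos hj, h]
  · filter_upwards [eventually_ge_atTop 0, hA.eventually_apply_eq_zero_atTop u w] with j hj h
    rw [noModeTerm, if_neg hj.not_gt, h, map_zero]

theorem noMode_add (hA : LocallyAnnihilating op) (u v : S) (m : ℤ) (w₁ w₂ : W) :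
    noMode op u v m (w₁ + w₂) = noMode op u v m w₁ + noMode op u v m w₂ := by
  have hterm : ∀ j, noModeTerm op u v m (w₁ + w₂) j =
      noModeTerm op u v m w₁ j + noModeTerm op u v m w₂ j := by
    intro j
    unfold noModeTerm
    split_ifs <;> simp only [map_add]
  simp only [noMode_eq_finsum, finsum_congr hterm]
  exact finsum_add_distrib (hasFiniteSupport_noModeTerm hA u v m w₁)
    (hasFiniteSupport_noModeTerm hA u v m w₂)

theorem noMode_zero (u v : S) (m : ℤ) : noMode op u v m 0 = 0 := by
  simp [noMode_eq_finsum, noModeTerm]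

theorem noMode_finsum (hA : LocallyAnnihilating op) (u v : S) (m : ℤ) {ι : Type*} {f : ι → W}
    (hf : f.HasFiniteSupport) : noMode op u v m (∑ᶠ i, f i) = ∑ᶠ i, noMode op u v m (f i) :=
  map_finsum (AddMonoidHom.mk' _ (noMode_add hA u v m)) hf

theorem noModeTerm_apply_op_sub (hW : IsBosonicWeylSystem pair op) (u v x : S) (m k : ℤ)
    (w : W) (j : ℤ) :
    noModeTerm op u v m (op x k w) j - op x k (noModeTerm op u v m w j) =
      (if j = m + k then pair v x • op u j w else 0) +
        if j = -k then pair u x • op v (m - j) w else 0 := by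
  have hv : m - j + k = 0 ↔ j = m + k := by omega
  have hu : j + k = 0 ↔ j = -k := by omega
  by_cases hj : j < 0
  · rw [noModeTerm, noModeTerm, if_pos hj, if_pos hj, hW.apply_comm v x, map_add,
      hW.apply_comm u x]
    simp only [hv, hu]
    split_ifs <;> simp only [map_smul, map_zero, add_zero, zero_add] <;> abel
  · rw [noModeTerm, noModeTerm, if_neg hj, if_neg hj, hW.apply_comm u x, map_add,
      hW.apply_comm v x]
    simp only [hv, hu]
    split_ifs <;> simp only [map_smul, map_zero, add_zero, zero_add] <;> abel

theorem noMode_apply_op (hW : IsBosonicWeylSystem pair op) (hA : LocallyAnnihilating op)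
    (u v x : S) (m k : ℤ) (w : W) :
    noMode op u v m (op x k w) =
      op x k (noMode op u v m w) + (pair v x • op u (m + k) w + pair u x • op v (m + k) w) := by
  rw [← sub_eq_iff_eq_add', noMode_eq_finsum, noMode_eq_finsum,
    map_finsum (op x k) (hasFiniteSupport_noModeTerm hA u v m w),
    ← finsum_sub_distrib (hasFiniteSupport_noModeTerm hA u v m _)
      ((hasFiniteSupport_noModeTerm hA u v m w).fun_comp (map_zero _)),
    finsum_congr (noModeTerm_apply_op_sub hW u v x m k w),
    finsum_add_distrib (hasFiniteSupport_ite_eq _ _) (hasFiniteSupport_ite_eq _ _),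
    finsum_ite_eq, finsum_ite_eq, sub_neg_eq_add]

end WeylSystem

section WeylPair

variable {W : Type*} [AddCommGroup W] [Module ℂ W] {op : Bool → ℤ → Module.End ℂ W}

theorem noMode_apply_annihilation (hW : IsBosonicWeylSystem pairAAstar op)
    (hA : LocallyAnnihilating op) (m k : ℤ) (w : W) :
    noMode op false true m (op false k w) =
      op false k (noMode op false true m w) + op false (m + k) w := by
  simp [noMode_apply_op hW hA, pairAAstar]

theorem noMode_apply_creation (hW : IsBosonicWeylSystem pairAAstar op)
    (hA : LocallyAnnihilating op) (m k : ℤ) (w : W) :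
    noMode op false true m (op true k w) =
      op true k (noMode op false true m w) - op true (m + k) w := by
  simp [noMode_apply_op hW hA, pairAAstar, sub_eq_add_neg]

theorem noMode_noModeTerm_sub (hW : IsBosonicWeylSystem pairAAstar op)
    (hA : LocallyAnnihilating op) (m n : ℤ) (w : W) (j : ℤ) :
    noMode op false true m (noModeTerm op false true n w j) -
        noModeTerm op false true n (noMode op false true m w) j =
      op false (m + j) (op true (m + n - (m + j)) w) - op false j (op true (m + n - j) w) := by
  rw [show m + n - (m + j) = n - j by ring]
  by_cases hj : j < 0
  · rw [noModeTerm, noModeTerm, if_pos hj, if_pos hj, noMode_apply_annihilation hW hA,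
      noMode_apply_creation hW hA, map_sub, show m + (n - j) = m + n - j by ring]
    abel
  · rw [noModeTerm, noModeTerm, if_neg hj, if_neg hj, noMode_apply_creation hW hA,
      noMode_apply_annihilation hW hA, map_add, show m + (n - j) = m + n - j by ring,
      hW.apply_comm true false (n - j) (m + j), hW.apply_comm true false (m + n - j) j,
      show n - j + (m + j) = m + n - j + j by ring]
    abel

end WeylPair

/-- for a locally annihilating bosonic Weyl system `{a(k), a*(k)}` with
`⟨a,a*⟩ = -1`, `⟨a*,a⟩ = 1`, the modes `H(m) = (:aa*:)(m)` of the normally ordered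
bilinear current satisfy `[H(m), H(n)] = -m δ_{m+n,0} id`: a Heisenberg algebra at
level `-1`. -/
theorem weyl_pair_current_heisenberg {W : Type*} [AddCommGroup W] [Module ℂ W]
    (op : Bool → ℤ → Module.End ℂ W)
    (hW : IsBosonicWeylSystem pairAAstar op) (hA : LocallyAnnihilating op)
    (m n : ℤ) (w : W) :
    noMode op false true m (noMode op false true n w) -
      noMode op false true n (noMode op false true m w) =
      if m + n = 0 then (-(m : ℂ)) • w else 0 := by
  have hterm := hasFiniteSupport_noModeTerm hA false true n
  calc _ = ∑ᶠ j, (noMode op false true m (noModeTerm op false true n w j) -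
          noModeTerm op false true n (noMode op false true m w) j) := by
        rw [noMode_eq_finsum _ _ n w, noMode_finsum hA _ _ m (hterm w), noMode_eq_finsum,
          finsum_sub_distrib ((hterm w).fun_comp (noMode_zero _ _ m)) (hterm _)]
    _ = ∑ᶠ j, (op false (m + j) (op true (m + n - (m + j)) w) -
          op false j (op true (m + n - j) w)) :=
        finsum_congr (noMode_noModeTerm_sub hW hA m n w)
    _ = m • -if m + n = 0 then pairAAstar true false • w else 0 :=
        finsum_comp_add_sub_of_eventually
          (hA.eventually_apply_apply_sub_atBot false true (m + n) w)
          (hW.eventually_apply_apply_sub_atTop hA false true (m + n) w) m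
    _ = _ := by split_ifs <;> simp [pairAAstar, Int.cast_smul_eq_zsmul]
end
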